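/- For every x in [0,1], the integral of f over [x, 1 - x] equals 1/2 - x; that is, ∫_x^{1-x} f(t) dt = 1/2 - x. -/

import Mathlib

/-!
The key fact is the symmetry `f t + f (1 - t) = 1`. The self-similarity relations show that the
defect `g t = f t + f (1 - t) - 1` satisfies `|g y| ≤ (2/3) |g x|` for some `x ∈ [0,1]`, so at a
maximum point of `|g|` on the compact interval the maximum is `0`. Reflecting `t ↦ 1 - t` maps
`[x, 1 - x]` to itself, hence `2 ∫_x^{1-x} f = ∫_x^{1-x} (f t + f (1 - t)) dt = 1 - 2x`.
-/

open intervalIntegral Set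

lemma eqOn_zero_of_abs_le_mul_abs {X : Type*} [TopologicalSpace X] {s : Set X} {g : X → ℝ}
    {c : ℝ} (hs : IsCompact s) (hg : ContinuousOn g s) (hc : c < 1)
    (hcontr : ∀ y ∈ s, ∃ x ∈ s, |g y| ≤ c * |g x|) : ∀ y ∈ s, g y = 0 := by
  rcases s.eq_empty_or_nonempty with rfl | hne
  · simp
  obtain ⟨z, hz, hmax⟩ := hs.exists_isMaxOn hne hg.abs
  obtain ⟨x, hx, hzx⟩ := hcontr z hz
  have hxz : |g x| ≤ |g z| := hmax hx
  have hz0 : |g z| ≤ 0 := by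
    rcases le_total c 0 with hc0 | hc0
    · nlinarith [abs_nonneg (g x)]
    · nlinarith [mul_le_mul_of_nonneg_left hxz hc0]
  intro y hy
  exact abs_nonpos_iff.mp ((hmax hy : |g y| ≤ |g z|).trans hz0)

lemma integral_eq_of_add_reflect_eq {f : ℝ → ℝ} {a b c : ℝ}
    (hf : IntervalIntegrable f MeasureTheory.volume a b)
    (hsymm : ∀ t ∈ uIcc a b, f t + f (a + b - t) = c) :
    ∫ t in a..b, f t = (b - a) * c / 2 := by
  have hreflect : ∫ t in a..b, f (a + b - t) = ∫ t in a..b, f t := by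
    rw [integral_comp_sub_left f (a + b)]
    ring_nf
  have hcompl : ∫ t in a..b, f (a + b - t) = ∫ t in a..b, (c - f t) :=
    integral_congr fun t ht => by linarith [hsymm t ht]
  rw [integral_sub intervalIntegrable_const hf, intervalIntegral.integral_const,
    smul_eq_mul, hreflect] at hcompl
  linarith

section SelfSimilar

variable {f : ℝ → ℝ}
    (hw1 : ∀ x ∈ Set.Icc (0:ℝ) 1, f (x / 3) = (2/3) * f x)
    (hw2 : ∀ x ∈ Set.Icc (0:ℝ) 1, f ((2 - x) / 3) = (1/3) * (1 + f x))
    (hw3 : ∀ x ∈ Set.Icc (0:ℝ) 1, f ((2 + x) / 3) = 1/3 + (2/3) * f x)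
include hw1 hw2 hw3

lemma exists_abs_reflect_defect_le {y : ℝ} (hy : y ∈ Icc (0:ℝ) 1) :
    ∃ x ∈ Icc (0:ℝ) 1, |f y + f (1 - y) - 1| ≤ 2/3 * |f x + f (1 - x) - 1| := by
  obtain ⟨hy0, hy1⟩ := hy
  rcases le_or_gt y (1/3) with hlow | hlow
  · refine ⟨3 * y, ⟨by linarith, by linarith⟩, le_of_eq ?_⟩
    have e1 := hw1 (3 * y) ⟨by linarith, by linarith⟩
    have e2 := hw3 (1 - 3 * y) ⟨by linarith, by linarith⟩
    rw [show 3 * y / 3 = y by ring] at e1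
    rw [show (2 + (1 - 3 * y)) / 3 = 1 - y by ring] at e2
    rw [e1, e2, ← abs_of_pos (by norm_num : (0:ℝ) < 2/3), ← abs_mul]
    ring_nf
  rcases le_or_gt y (2/3) with hmid | hmid
  · refine ⟨2 - 3 * y, ⟨by linarith, by linarith⟩, ?_⟩
    have e1 := hw2 (2 - 3 * y) ⟨by linarith, by linarith⟩
    have e2 := hw2 (3 * y - 1) ⟨by linarith, by linarith⟩
    rw [show (2 - (2 - 3 * y)) / 3 = y by ring] at e1
    rw [show (2 - (3 * y - 1)) / 3 = 1 - y by ring] at e2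
    have hdefect : f y + f (1 - y) - 1 = 1/3 * (f (2 - 3 * y) + f (1 - (2 - 3 * y)) - 1) := by
      rw [e1, e2, show 1 - (2 - 3 * y) = 3 * y - 1 by ring]; ring
    rw [hdefect, abs_mul, abs_of_pos (by norm_num : (0:ℝ) < 1/3)]
    linarith [abs_nonneg (f (2 - 3 * y) + f (1 - (2 - 3 * y)) - 1)]
  · refine ⟨3 * y - 2, ⟨by linarith, by linarith⟩, le_of_eq ?_⟩
    have e1 := hw3 (3 * y - 2) ⟨by linarith, by linarith⟩
    have e2 := hw1 (3 - 3 * y) ⟨by linarith, by linarith⟩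
    rw [show (2 + (3 * y - 2)) / 3 = y by ring] at e1
    rw [show (3 - 3 * y) / 3 = 1 - y by ring] at e2
    rw [e1, e2, show 1 - (3 * y - 2) = 3 - 3 * y by ring,
      ← abs_of_pos (by norm_num : (0:ℝ) < 2/3), ← abs_mul]
    ring_nf

lemma add_apply_one_sub_eq_one (hcont : ContinuousOn f (Icc 0 1)) :
    ∀ x ∈ Icc (0:ℝ) 1, f x + f (1 - x) = 1 := by
  have hreflect : ContinuousOn (fun x => f (1 - x)) (Icc 0 1) :=
    hcont.comp (by fun_prop) fun x hx => ⟨by linarith [hx.2], by linarith [hx.1]⟩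
  intro x hx
  have hdefect : f x + f (1 - x) - 1 = 0 :=
    eqOn_zero_of_abs_le_mul_abs (g := fun y => f y + f (1 - y) - 1) isCompact_Icc
      ((hcont.add hreflect).sub continuousOn_const) (by norm_num)
      (fun y hy => exists_abs_reflect_defect_le hw1 hw2 hw3 hy) x hx
  linarith

end SelfSimilar

theorem bourbaki_stmt_general (f : ℝ → ℝ)
    (hcont : ContinuousOn f (Set.Icc 0 1))
    (hw1 : ∀ x ∈ Set.Icc (0:ℝ) 1, f (x / 3) = (2/3) * f x)
    (hw2 : ∀ x ∈ Set.Icc (0:ℝ) 1, f ((2 - x) / 3) = (1/3) * (1 + f x))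
    (hw3 : ∀ x ∈ Set.Icc (0:ℝ) 1, f ((2 + x) / 3) = 1/3 + (2/3) * f x) :
    ∀ x ∈ Set.Icc (0:ℝ) 1, ∫ t in x..(1 - x), f t = 1/2 - x := by
  intro x hx
  have hsub : uIcc x (1 - x) ⊆ Icc (0:ℝ) 1 :=
    uIcc_subset_Icc hx ⟨by linarith [hx.2], by linarith [hx.1]⟩
  have hsymm : ∀ t ∈ uIcc x (1 - x), f t + f (x + (1 - x) - t) = 1 := fun t ht => by
    rw [add_sub_cancel]
    exact add_apply_one_sub_eq_one hw1 hw2 hw3 hcont t (hsub ht)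
  rw [integral_eq_of_add_reflect_eq ((hcont.mono hsub).intervalIntegrable) hsymm]
  ring

theorem bourbaki_stmt (f : ℝ → ℝ)
    (hcont : ContinuousOn f (Set.Icc 0 1))
    (h0 : f 0 = 0) (h1 : f 1 = 1)
    (hw1 : ∀ x ∈ Set.Icc (0:ℝ) 1, f (x / 3) = (2/3) * f x)
    (hw2 : ∀ x ∈ Set.Icc (0:ℝ) 1, f ((2 - x) / 3) = (1/3) * (1 + f x))
    (hw3 : ∀ x ∈ Set.Icc (0:ℝ) 1, f ((2 + x) / 3) = 1/3 + (2/3) * f x) :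
    ∀ x ∈ Set.Icc (0:ℝ) 1, ∫ t in x..(1 - x), f t = 1/2 - x :=
  bourbaki_stmt_general f hcont hw1 hw2 hw3
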